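/- arXiv:2006.05940 — 2 statements merged into one kernel-verified Lean document; each statement's English description precedes it below -/
import Mathlib

section
/- Let n ≥ 2 and let u be a convex continuous function on the open ball B₂ ⊂ ℝⁿ of radius 2 centered at the origin, such that u ≥ 0 in B₂, u = 0 on the slice {x ∈ B₂ : x_n = 0}, and u(t·e_n) = o(t) as t → 0⁺ (i.e. u(t·e_n)/t → 0 as t → 0⁺). Then u is NOT a viscosity solution of σ₂(D²u) ≥ 1 in B₂: there exist a 2-convex C² function φ and a point x₀ ∈ B₂ such that φ touches u from above at x₀ and σ₂(D²φ(x₀)) < 1. -/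
open scoped Topology

/-- The Hessian matrix of `φ` at `x`, defined via the second iterated Fréchet derivative. -/
noncomputable def hessian {n : ℕ} (φ : EuclideanSpace ℝ (Fin n) → ℝ)
    (x : EuclideanSpace ℝ (Fin n)) : Matrix (Fin n) (Fin n) ℝ :=
  fun i j => iteratedFDeriv ℝ 2 φ x ![EuclideanSpace.single i 1, EuclideanSpace.single j 1]

/-- `σ₁(M) = tr M`. -/
noncomputable def sigma1 {n : ℕ} (M : Matrix (Fin n) (Fin n) ℝ) : ℝ := M.trace

/-- `σ₂(M) = ((tr M)² − tr (M²)) / 2`. -/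
noncomputable def sigma2 {n : ℕ} (M : Matrix (Fin n) (Fin n) ℝ) : ℝ :=
  (M.trace ^ 2 - (M * M).trace) / 2

/-- A `C²` function is 2-convex if `σ₁(D²φ) ≥ 0` and `σ₂(D²φ) ≥ 0` everywhere. -/
def TwoConvex {n : ℕ} (φ : EuclideanSpace ℝ (Fin n) → ℝ) : Prop :=
  ContDiff ℝ 2 φ ∧ ∀ x, 0 ≤ sigma1 (hessian φ x) ∧ 0 ≤ sigma2 (hessian φ x)

/-- `u` is a viscosity solution of `σ₂(D²u) ≥ 1` in `Ω`: whenever a 2-convex `C²`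
function `φ` touches `u` from above at `x₀ ∈ Ω`, we have `σ₂(D²φ(x₀)) ≥ 1`. -/
def ViscositySupersol {n : ℕ} (u : EuclideanSpace ℝ (Fin n) → ℝ)
    (Ω : Set (EuclideanSpace ℝ (Fin n))) : Prop :=
  ∀ φ : EuclideanSpace ℝ (Fin n) → ℝ, TwoConvex φ →
    ∀ x₀ ∈ Ω, φ x₀ = u x₀ → (∀ᶠ x in 𝓝 x₀, u x ≤ φ x) →
      1 ≤ sigma2 (hessian φ x₀)

/-!
Convexity and the vanishing on the slice bound `u` by `u(2s eₙ)/2 = o(s)` on the cylinder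
`C_s = {|x'|² ≤ 1/4, 0 ≤ xₙ ≤ s}`. The paraboloid `φ₀ = (a/2)(|x'|² + (xₙ - s/2)²/s²)` with
`a = 4u(2s eₙ) + s²` is at least `a/8 > max u` on `∂C_s` and vanishes at the centre `(s/2) eₙ`,
where `u ≥ 0`; so `φ₀ - u` has an interior minimum on `C_s`, and shifting `φ₀` by it gives a
2-convex function touching `u` from above. Its Hessian is `diag(a, …, a, a/s²)`, whose
`σ₂ = (n-1)(a/s)² + (n-1)(n-2)a²/2` tends to `0` as `s → 0⁺`, because `a/s → 0`.
-/

open Finset Filter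

section DiagQuadratic

variable {n : ℕ} (c : Fin n → ℝ) (p : EuclideanSpace ℝ (Fin n)) (k : ℝ)

noncomputable def diagQuadratic (x : EuclideanSpace ℝ (Fin n)) : ℝ :=
  ∑ i, c i / 2 * (x i - p i) ^ 2 + k

lemma diagQuadratic_eq_add (x : EuclideanSpace ℝ (Fin n)) :
    diagQuadratic c p k x = diagQuadratic c p 0 x + k := by
  simp [diagQuadratic]

noncomputable def diagBilin :
    EuclideanSpace ℝ (Fin n) →L[ℝ] EuclideanSpace ℝ (Fin n) →L[ℝ] ℝ :=
  ∑ i, c i • (EuclideanSpace.proj i).smulRight (EuclideanSpace.proj i)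

lemma diagBilin_apply_single (x : EuclideanSpace ℝ (Fin n)) (j : Fin n) :
    diagBilin c x (EuclideanSpace.single j 1) = c j * x j := by
  simp [diagBilin]

lemma hasFDerivAt_diagQuadratic (x : EuclideanSpace ℝ (Fin n)) :
    HasFDerivAt (diagQuadratic c p k) (diagBilin c (x - p)) x := by
  have hterm (i : Fin n) := ((((EuclideanSpace.proj (𝕜 := ℝ) i).hasFDerivAt (x := x)).sub_const
    (p i)).pow 2).const_mul (c i / 2)
  refine ((HasFDerivAt.fun_sum fun i _ => hterm i).add_const k).congr_fderiv ?_
  ext v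
  simp only [PiLp.proj_apply, Nat.add_one_sub_one, pow_one, nsmul_eq_mul, Nat.cast_ofNat,
    _root_.sum_apply, smul_apply, smul_eq_mul, diagBilin, ContinuousLinearMap.smulRight_apply,
    PiLp.sub_apply]
  refine Finset.sum_congr rfl fun i _ => ?_
  ring

lemma contDiff_diagQuadratic : ContDiff ℝ 2 (diagQuadratic c p k) := by
  unfold diagQuadratic; fun_prop

lemma hessian_diagQuadratic (x : EuclideanSpace ℝ (Fin n)) :
    hessian (diagQuadratic c p k) x = Matrix.diagonal c := by
  have hD : fderiv ℝ (diagQuadratic c p k) = fun y => diagBilin c y - diagBilin c p := by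
    ext1 y; rw [(hasFDerivAt_diagQuadratic c p k y).fderiv, map_sub]
  have hD2 : fderiv ℝ (fderiv ℝ (diagQuadratic c p k)) x = diagBilin c := by
    rw [hD]; exact ((diagBilin c).hasFDerivAt.sub_const _).fderiv
  ext i j
  by_cases h : i = j <;>
    simp [hessian, iteratedFDeriv_two_apply, hD2, diagBilin_apply_single, h,
      Ne.symm]

end DiagQuadratic

section DiagonalIte

variable {n : ℕ} (N : Fin n)

lemma sum_ite_eq_add_mul (b a : ℝ) :
    ∑ i : Fin n, (if i = N then b else a) = b + ((n : ℝ) - 1) * a := by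
  simp [Finset.sum_ite, Finset.filter_eq', Finset.filter_ne', Finset.card_erase_of_mem,
    Nat.cast_sub N.pos]

lemma sigma1_diagonal_ite (α β : ℝ) :
    sigma1 (Matrix.diagonal fun i : Fin n => if i = N then β else α) = β + ((n : ℝ) - 1) * α := by
  rw [sigma1, Matrix.trace_diagonal, sum_ite_eq_add_mul]

lemma sigma2_diagonal_ite (α β : ℝ) :
    sigma2 (Matrix.diagonal fun i : Fin n => if i = N then β else α) =
      ((n : ℝ) - 1) * α * β + ((n : ℝ) - 1) * ((n : ℝ) - 2) * α ^ 2 / 2 := by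
  have hsq : (fun i : Fin n => (if i = N then β else α) * (if i = N then β else α)) =
      fun i => if i = N then β ^ 2 else α ^ 2 := by
    ext i; split_ifs <;> ring
  rw [sigma2, Matrix.diagonal_mul_diagonal, Matrix.trace_diagonal, Matrix.trace_diagonal, hsq,
    sum_ite_eq_add_mul, sum_ite_eq_add_mul]
  ring

lemma twoConvex_diagQuadratic_ite {α β : ℝ} (hα : 0 ≤ α) (hβ : 0 ≤ β)
    (p : EuclideanSpace ℝ (Fin n)) (k : ℝ) :
    TwoConvex (diagQuadratic (fun i => if i = N then β else α) p k) := by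
  obtain ⟨m, rfl⟩ : ∃ m, n = m + 1 := Nat.exists_eq_add_of_le' N.pos
  have hm : (0 : ℝ) ≤ m * (m - 1) := by
    rcases m with _ | m
    · simp
    · push_cast; nlinarith
  refine ⟨contDiff_diagQuadratic _ _ _, fun x => ?_⟩
  rw [hessian_diagQuadratic, sigma1_diagonal_ite, sigma2_diagonal_ite]
  push_cast
  constructor
  · nlinarith [mul_nonneg (Nat.cast_nonneg m : (0 : ℝ) ≤ m) hα]
  · nlinarith [mul_nonneg (mul_nonneg (Nat.cast_nonneg m : (0 : ℝ) ≤ m) hα) hβ,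
      mul_nonneg hm (sq_nonneg α)]

end DiagonalIte

section Cylinder

variable {n : ℕ} (N : Fin n)

noncomputable def offAxisNormSq (x : EuclideanSpace ℝ (Fin n)) : ℝ :=
  ∑ i ∈ univ.erase N, x i ^ 2

lemma offAxisNormSq_nonneg (x : EuclideanSpace ℝ (Fin n)) : 0 ≤ offAxisNormSq N x :=
  Finset.sum_nonneg fun _ _ => sq_nonneg _

lemma continuous_offAxisNormSq : Continuous (offAxisNormSq N) := by
  unfold offAxisNormSq; fun_prop

lemma sq_add_offAxisNormSq (x : EuclideanSpace ℝ (Fin n)) :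
    x N ^ 2 + offAxisNormSq N x = ‖x‖ ^ 2 := by
  rw [offAxisNormSq, Finset.add_sum_erase _ (fun i => x i ^ 2) (mem_univ N),
    EuclideanSpace.norm_eq, Real.sq_sqrt (by positivity)]
  simp

lemma offAxisNormSq_smul_add_smul_single (c t : ℝ) (x : EuclideanSpace ℝ (Fin n)) :
    offAxisNormSq N (c • x + t • EuclideanSpace.single N 1) = c ^ 2 * offAxisNormSq N x := by
  rw [offAxisNormSq, offAxisNormSq, Finset.mul_sum]
  refine Finset.sum_congr rfl fun i hi => ?_
  simp only [PiLp.add_apply, PiLp.smul_apply, smul_eq_mul,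
    PiLp.single_eq_of_ne _ (Finset.mem_erase.1 hi).1, mul_zero, add_zero]
  ring

lemma norm_smul_single (t : ℝ) : ‖t • EuclideanSpace.single N (1 : ℝ)‖ = |t| := by
  simp [norm_smul]

lemma smul_single_mem_ball_zero {t r : ℝ} (ht : |t| < r) :
    t • EuclideanSpace.single N (1 : ℝ) ∈ Metric.ball 0 r := by
  rwa [mem_ball_zero_iff, norm_smul_single]

lemma diagQuadratic_ite_smul_single (α β t k : ℝ) (x : EuclideanSpace ℝ (Fin n)) :
    diagQuadratic (fun i => if i = N then β else α) (t • EuclideanSpace.single N 1) k x =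
      α / 2 * offAxisNormSq N x + β / 2 * (x N - t) ^ 2 + k := by
  rw [diagQuadratic, ← Finset.add_sum_erase _ _ (mem_univ N), offAxisNormSq, Finset.mul_sum]
  have hoff : ∀ i ∈ univ.erase N,
      (if i = N then β else α) / 2 * (x i - (t • EuclideanSpace.single N (1 : ℝ)) i) ^ 2 =
        α / 2 * x i ^ 2 := fun i hi => by simp [(Finset.mem_erase.1 hi).1]
  rw [Finset.sum_congr rfl hoff]
  simp only [↓reduceIte, PiLp.smul_apply, PiLp.single_eq_same, smul_eq_mul, mul_one]
  ring

def cylinder (s : ℝ) : Set (EuclideanSpace ℝ (Fin n)) :=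
  {x | offAxisNormSq N x ≤ 1 / 4 ∧ 0 ≤ x N ∧ x N ≤ s}

lemma isClosed_cylinder (s : ℝ) : IsClosed (cylinder N s) :=
  (isClosed_le (continuous_offAxisNormSq N) continuous_const).inter
    ((isClosed_le continuous_const (EuclideanSpace.proj N).continuous).inter
      (isClosed_le (EuclideanSpace.proj N).continuous continuous_const))

lemma norm_sq_le_of_mem_cylinder {s : ℝ} {x : EuclideanSpace ℝ (Fin n)} (hx : x ∈ cylinder N s) :
    ‖x‖ ^ 2 ≤ s ^ 2 + 1 / 4 := by
  obtain ⟨hw, h0, hs⟩ := hx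
  rw [← sq_add_offAxisNormSq N x]
  nlinarith

lemma cylinder_subset_ball {s : ℝ} (hs : s < 1) : cylinder N s ⊆ Metric.ball 0 2 := by
  intro x hx
  have := norm_sq_le_of_mem_cylinder N hx
  have h0 : 0 ≤ s := hx.2.1.trans hx.2.2
  rw [mem_ball_zero_iff]
  nlinarith [norm_nonneg x]

lemma isCompact_cylinder (s : ℝ) : IsCompact (cylinder N s) := by
  refine Metric.isCompact_of_isClosed_isBounded (isClosed_cylinder N s)
    ((Metric.isBounded_closedBall (x := 0) (r := |s| + 1)).subset fun x hx => ?_)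
  have := norm_sq_le_of_mem_cylinder N hx
  rw [mem_closedBall_zero_iff]
  nlinarith [norm_nonneg x, abs_nonneg s, sq_abs s]

/-- Writing `x = (y + z) / 2` with `y` on the slice and `z` on the segment `[0, 2s eₙ]`. -/
lemma ConvexOn.le_of_mem_cylinder {u : EuclideanSpace ℝ (Fin n) → ℝ}
    (hconv : ConvexOn ℝ (Metric.ball 0 2) u)
    (hslice : ∀ x ∈ Metric.ball (0 : EuclideanSpace ℝ (Fin n)) 2, x N = 0 → u x = 0)
    {s : ℝ} (hs0 : 0 < s) (hs1 : s < 1) (htop : 0 ≤ u ((2 * s) • EuclideanSpace.single N 1))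
    {x : EuclideanSpace ℝ (Fin n)} (hx : x ∈ cylinder N s) :
    u x ≤ u ((2 * s) • EuclideanSpace.single N 1) / 2 := by
  set e : EuclideanSpace ℝ (Fin n) := EuclideanSpace.single N 1
  obtain ⟨hw, hx0, hxs⟩ := hx
  have hzero : (0 : EuclideanSpace ℝ (Fin n)) ∈ Metric.ball 0 2 := Metric.mem_ball_self two_pos
  have htop_mem : (2 * s) • e ∈ Metric.ball 0 2 :=
    smul_single_mem_ball_zero N (by rw [abs_of_pos] <;> linarith)
  have hz : u ((2 * x N) • e) ≤ u ((2 * s) • e) := by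
    have hθ0 : 0 ≤ x N / s := div_nonneg hx0 hs0.le
    have hθ1 : x N / s ≤ 1 := (div_le_one hs0).2 hxs
    have hθ : x N / s * (2 * s) = 2 * x N := by field_simp
    have h := hconv.2 htop_mem hzero hθ0 (sub_nonneg.2 hθ1) (add_sub_cancel _ _)
    rw [smul_zero, add_zero, smul_smul, hθ, hslice 0 hzero rfl, smul_zero, add_zero,
      smul_eq_mul] at h
    nlinarith
  set y := (2 : ℝ) • x + (-(2 * x N)) • e
  have hyN : y N = 0 := by simp [y, e]
  have hy_mem : y ∈ Metric.ball 0 2 := by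
    have := sq_add_offAxisNormSq N y
    rw [hyN, offAxisNormSq_smul_add_smul_single] at this
    rw [mem_ball_zero_iff]
    nlinarith [norm_nonneg y]
  have hmid := hconv.2 hy_mem (smul_single_mem_ball_zero N (t := 2 * x N)
    (by rw [abs_of_nonneg] <;> linarith))
    (by norm_num : (0 : ℝ) ≤ 1 / 2) (by norm_num : (0 : ℝ) ≤ 1 / 2) (by norm_num)
  have hx : (1 / 2 : ℝ) • y + (1 / 2 : ℝ) • (2 * x N) • e = x := by
    simp only [y]; module
  rw [hx, hslice y hy_mem hyN, smul_eq_mul, smul_eq_mul] at hmid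
  linarith

end Cylinder

section TestFunction

variable {n : ℕ} (N : Fin n)

lemma exists_isLocalMin_diagQuadratic_sub {u : EuclideanSpace ℝ (Fin n) → ℝ} {s G a : ℝ}
    (hs : 0 < s) (hcont : ContinuousOn u (cylinder N s)) (hub : ∀ x ∈ cylinder N s, u x ≤ G)
    (hcenter : 0 ≤ u ((s / 2) • EuclideanSpace.single N 1)) (ha : 8 * G < a) :
    ∃ z ∈ cylinder N s, IsLocalMin (fun x => diagQuadratic (fun i => if i = N then a / s ^ 2 else a)
      ((s / 2) • EuclideanSpace.single N 1) 0 x - u x) z := by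
  set e : EuclideanSpace ℝ (Fin n) := EuclideanSpace.single N 1
  set φ := diagQuadratic (fun i => if i = N then a / s ^ 2 else a) ((s / 2) • e) 0
  have hφ (x) : φ x = a / 2 * offAxisNormSq N x + a / s ^ 2 / 2 * (x N - s / 2) ^ 2 := by
    simp [φ, e, diagQuadratic_ite_smul_single]
  have hcenter_off : offAxisNormSq N ((s / 2) • e) = 0 := by
    simpa using offAxisNormSq_smul_add_smul_single N 0 (s / 2) 0
  have hcenter_N : ((s / 2) • e) N = s / 2 := by simp [e]
  have hcenter_mem : (s / 2) • e ∈ cylinder N s :=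
    ⟨by rw [hcenter_off]; norm_num, by rw [hcenter_N]; linarith, by rw [hcenter_N]; linarith⟩
  have ha0 : 0 < a := by linarith [hub _ hcenter_mem]
  set V := {x : EuclideanSpace ℝ (Fin n) | offAxisNormSq N x < 1 / 4 ∧ 0 < x N ∧ x N < s}
  have hVK : V ⊆ cylinder N s := fun x ⟨hw, h0, hs⟩ => ⟨hw.le, h0.le, hs.le⟩
  have hV : IsOpen V :=
    (isOpen_lt (continuous_offAxisNormSq N) continuous_const).inter
      ((isOpen_lt continuous_const (EuclideanSpace.proj N).continuous).inter
        (isOpen_lt (EuclideanSpace.proj N).continuous continuous_const))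
  have hboundary : ∀ x ∈ cylinder N s \ V, a / 8 ≤ φ x := by
    rintro x ⟨⟨hw, h0, hxs⟩, hxV⟩
    have hoff := offAxisNormSq_nonneg N x
    have hside : 1 / 4 ≤ offAxisNormSq N x ∨ s ^ 2 / 4 ≤ (x N - s / 2) ^ 2 := by
      simp only [V, Set.mem_ofPred_eq, not_and_or, not_lt] at hxV
      rcases hxV with hw' | h0' | hs'
      · exact .inl hw'
      · right; nlinarith
      · right; nlinarith
    rw [hφ]
    rcases hside with hside | hside
    · have : 0 ≤ a / s ^ 2 / 2 * (x N - s / 2) ^ 2 := by positivity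
      nlinarith
    · calc a / 8 = a / s ^ 2 / 2 * (s ^ 2 / 4) := by field_simp; ring
        _ ≤ a / s ^ 2 / 2 * (x N - s / 2) ^ 2 := by gcongr
        _ ≤ _ := le_add_of_nonneg_left (by positivity)
  obtain ⟨z, hzV, hz⟩ := (isCompact_cylinder N s).exists_isLocalMin_mem_open hVK
    (((contDiff_diagQuadratic _ _ _).continuous.continuousOn).sub hcont) hcenter_mem
    (fun x hx => by
      have := hboundary x hx
      have := hub x hx.1
      have : φ ((s / 2) • e) = 0 := by rw [hφ, hcenter_off]; simp [e]
      show φ _ - _ < φ x - u x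
      linarith) hV
  exact ⟨z, hVK hzV, hz⟩

lemma eventually_sigma2_diagonal_lt_one {g : ℝ → ℝ}
    (hg : Tendsto (fun t => g t / t) (𝓝[>] 0) (𝓝 0)) :
    ∀ᶠ s in 𝓝[>] (0 : ℝ), sigma2 (Matrix.diagonal fun i : Fin n =>
      if i = N then (4 * g (2 * s) + s ^ 2) / s ^ 2 else 4 * g (2 * s) + s ^ 2) < 1 := by
  set a := fun s : ℝ => 4 * g (2 * s) + s ^ 2
  have hid : Tendsto (fun s : ℝ => s) (𝓝[>] 0) (𝓝 0) :=
    tendsto_nhdsWithin_of_tendsto_nhds tendsto_id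
  have hdouble : Tendsto (fun s : ℝ => 2 * s) (𝓝[>] 0) (𝓝[>] 0) := by
    simpa using Filter.TendstoNhdsWithinIoi.const_mul two_pos (tendsto_id (x := 𝓝[>] (0 : ℝ)))
  have hslope : Tendsto (fun s => a s / s) (𝓝[>] 0) (𝓝 0) := by
    have h := ((hg.comp hdouble).const_mul 8).add hid
    rw [mul_zero, add_zero] at h
    refine h.congr' (eventually_nhdsWithin_of_forall fun s (hs : 0 < s) => ?_)
    simp only [Function.comp_apply, a]
    field_simp
    ring
  have ha : Tendsto a (𝓝[>] 0) (𝓝 0) := by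
    have h := hslope.mul hid
    rw [mul_zero] at h
    exact h.congr' (eventually_nhdsWithin_of_forall fun s (hs : 0 < s) => div_mul_cancel₀ _ hs.ne')
  have hσ := ((hslope.pow 2).const_mul ((n : ℝ) - 1)).add
    (((ha.pow 2).const_mul (((n : ℝ) - 1) * ((n : ℝ) - 2))).div_const 2)
  simp only [ne_eq, OfNat.ofNat_ne_zero, not_false_eq_true, zero_pow, mul_zero, zero_div,
    add_zero] at hσ
  filter_upwards [hσ.eventually_lt_const one_pos, self_mem_nhdsWithin]
    with s hs (hs0 : 0 < s)
  rw [sigma2_diagonal_ite]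
  refine lt_of_eq_of_lt ?_ hs
  simp only [a]
  field_simp

end TestFunction

/-- A nonnegative convex function on `B₂` vanishing on the slice `{x_n = 0}` with
`u(t·e_n) = o(t)` as `t → 0⁺` cannot solve `σ₂(D²u) ≥ 1` in the viscosity sense:
some 2-convex `C²` function touches `u` from above at a point of `B₂` with `σ₂ < 1`. -/
theorem not_viscosity_supersol {n : ℕ} (hn : 2 ≤ n)
    (u : EuclideanSpace ℝ (Fin n) → ℝ)
    (huconv : ConvexOn ℝ (Metric.ball 0 2) u)
    (hucont : ContinuousOn u (Metric.ball 0 2))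
    (hnonneg : ∀ x ∈ Metric.ball (0 : EuclideanSpace ℝ (Fin n)) 2, 0 ≤ u x)
    (hslice : ∀ x ∈ Metric.ball (0 : EuclideanSpace ℝ (Fin n)) 2,
      x (⟨n - 1, by omega⟩ : Fin n) = 0 → u x = 0)
    (hlittleo : Filter.Tendsto
      (fun t : ℝ => u (t • EuclideanSpace.single (⟨n - 1, by omega⟩ : Fin n) 1) / t)
      (𝓝[>] (0 : ℝ)) (𝓝 0)) :
    ∃ φ : EuclideanSpace ℝ (Fin n) → ℝ, ∃ x₀ : EuclideanSpace ℝ (Fin n),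
      TwoConvex φ ∧ x₀ ∈ Metric.ball (0 : EuclideanSpace ℝ (Fin n)) 2 ∧
      φ x₀ = u x₀ ∧ (∀ᶠ x in 𝓝 x₀, u x ≤ φ x) ∧
      sigma2 (hessian φ x₀) < 1 := by
  set N : Fin n := ⟨n - 1, by omega⟩
  set e : EuclideanSpace ℝ (Fin n) := EuclideanSpace.single N 1
  obtain ⟨s, hσ, hs0, hs1⟩ :=
    ((eventually_sigma2_diagonal_lt_one N hlittleo).and (Ioo_mem_nhdsGT one_pos)).exists
  have hK := cylinder_subset_ball N hs1
  have htop : 0 ≤ u ((2 * s) • e) :=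
    hnonneg _ (smul_single_mem_ball_zero N (by rw [abs_of_pos] <;> linarith))
  set a := 4 * u ((2 * s) • e) + s ^ 2
  set c : Fin n → ℝ := fun i => if i = N then a / s ^ 2 else a
  set φ₀ := diagQuadratic c ((s / 2) • e) 0
  obtain ⟨z, hzK, hzmin⟩ := exists_isLocalMin_diagQuadratic_sub N hs0 (hucont.mono hK)
    (fun x hx => huconv.le_of_mem_cylinder N hslice hs0 hs1 htop hx)
    (hnonneg _ (smul_single_mem_ball_zero N (by rw [abs_of_pos] <;> linarith)))
    (by nlinarith : 8 * (u ((2 * s) • e) / 2) < a)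
  have ha : 0 ≤ a := by positivity
  refine ⟨diagQuadratic c ((s / 2) • e) (u z - φ₀ z), z,
    twoConvex_diagQuadratic_ite N ha (by positivity) _ _, hK hzK, ?_, ?_, ?_⟩
  · rw [diagQuadratic_eq_add]; ring
  · filter_upwards [hzmin] with x hx
    rw [diagQuadratic_eq_add]; linarith
  · rwa [hessian_diagQuadratic]
end

section
/- Let n ≥ 2, let Ω ⊂ ℝⁿ be a bounded open set, and let u be a continuous function on the closure of Ω that is a viscosity solution of σ₂(D²u) ≥ 1 in Ω. Let φ be a C² function on a neighborhood of the closure of Ω such that φ is convex and σ₂(D²φ(x)) < 1 for every x in the closure of Ω, and suppose φ ≥ u on ∂Ω. Then φ ≥ u on all of Ω. -/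
/-! If `u - φ` were positive somewhere, its maximum over the compact set `closure Ω` would be
attained at an interior point `z`, so `u - φ` has a local maximum at `z`. For `t > 0`, the
second-order Taylor polynomial of `φ` at `z` plus `t/2 ‖y - z‖²`, shifted to take the value
`u z` at `z`, then touches `u` from above at `z`: the extra quadratic term absorbs the Taylor
remainder. Its Hessian is the constant `D²φ(z) + t • 1`, a positive semidefinite matrix, so the
test function is 2-convex and the viscosity inequality gives `1 ≤ σ₂(D²φ(z) + t • 1)`. Letting
`t → 0` contradicts `σ₂(D²φ(z)) < 1`. -/

open scoped Topology

open Asymptotics Filter Metric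

section QuadraticForm

variable {n : ℕ}

-- Unlike `Matrix.PosSemidef`, no symmetry is required.
def HasNonnegQuadForm (M : Matrix (Fin n) (Fin n) ℝ) : Prop :=
  ∀ v : Fin n → ℝ, 0 ≤ ∑ i, ∑ j, v i * M i j * v j

theorem sum_single_mul_mul_single (M : Matrix (Fin n) (Fin n) ℝ) (i j : Fin n) (a b : ℝ) :
    ∑ k, ∑ l, (Pi.single i a : Fin n → ℝ) k * M k l * (Pi.single j b : Fin n → ℝ) l
      = a * M i j * b := by
  simp [Pi.single_apply, ite_mul, mul_ite]

namespace HasNonnegQuadForm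

variable {M : Matrix (Fin n) (Fin n) ℝ}

theorem diag_nonneg (hM : HasNonnegQuadForm M) (i : Fin n) : 0 ≤ M i i := by
  simpa [sum_single_mul_mul_single] using hM (Pi.single i 1)

theorem mul_le_mul_diag (hM : HasNonnegQuadForm M) (i j : Fin n) :
    M i j * M j i ≤ M i i * M j j := by
  have hquad (s : ℝ) : 0 ≤ M i i * (s * s) + (M i j + M j i) * s + M j j := by
    have := hM (Pi.single i s + Pi.single j 1)
    simp only [Pi.add_apply, add_mul, mul_add, Finset.sum_add_distrib,
      sum_single_mul_mul_single] at this
    linarith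
  have := discrim_le_zero hquad
  rw [discrim] at this
  nlinarith [sq_nonneg (M i j - M j i)]

theorem sigma1_nonneg (hM : HasNonnegQuadForm M) : 0 ≤ sigma1 M :=
  show 0 ≤ ∑ i, M i i from Finset.sum_nonneg fun i _ => hM.diag_nonneg i

theorem sigma2_nonneg (hM : HasNonnegQuadForm M) : 0 ≤ sigma2 M := by
  have hsum : M.trace ^ 2 - (M * M).trace = ∑ i, ∑ j, (M i i * M j j - M i j * M j i) := by
    simp only [Matrix.trace, Matrix.diag, Matrix.mul_apply, sq, Finset.sum_mul_sum,
      ← Finset.sum_sub_distrib]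
  rw [sigma2, hsum]
  have := Finset.sum_nonneg fun i (_ : i ∈ Finset.univ) => Finset.sum_nonneg
    fun j (_ : j ∈ Finset.univ) => sub_nonneg.2 (hM.mul_le_mul_diag i j)
  positivity

theorem add_smul_one (hM : HasNonnegQuadForm M) {t : ℝ} (ht : 0 ≤ t) :
    HasNonnegQuadForm (M + t • 1) := by
  intro v
  have hsplit : ∑ i, ∑ j, v i * (M + t • 1) i j * v j
      = ∑ i, ∑ j, v i * M i j * v j + t * ∑ i, v i * v i := by
    simp only [Matrix.add_apply, Matrix.smul_apply, Matrix.one_apply, smul_eq_mul, mul_ite,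
      mul_one, mul_zero, mul_add, add_mul, ite_mul, zero_mul, Finset.sum_add_distrib,
      Finset.sum_ite_eq, Finset.mem_univ, if_true, Finset.mul_sum, add_right_inj]
    exact Finset.sum_congr rfl fun i _ => by ring
  rw [hsplit]
  have := hM v
  have := Finset.sum_nonneg fun i (_ : i ∈ Finset.univ) => mul_self_nonneg (v i)
  positivity

end HasNonnegQuadForm

theorem continuous_sigma2_add_smul_one (M : Matrix (Fin n) (Fin n) ℝ) :
    Continuous fun t : ℝ => sigma2 (M + t • 1) := by
  simp only [sigma2, Matrix.trace, Matrix.diag, Matrix.mul_apply, Matrix.add_apply,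
    Matrix.smul_apply, Matrix.one_apply, smul_eq_mul]
  fun_prop

end QuadraticForm

section Calculus

variable {E F : Type*} [NormedAddCommGroup E] [NormedSpace ℝ E] [NormedAddCommGroup F]
  [NormedSpace ℝ F]

theorem hasFDerivAt_bilinear_sub_sub (C : E →L[ℝ] E →L[ℝ] F) (z x : E) :
    HasFDerivAt (fun y => C (y - z) (y - z)) ((C + C.flip) (x - z)) x := by
  have hsub := (hasFDerivAt_id (𝕜 := ℝ) x).sub_const z
  exact (C.isBoundedBilinearMap.hasFDerivAt (x - z, x - z)).comp x (hsub.prodMk hsub)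

theorem hasFDerivAt_quadratic (c : F) (l : E →L[ℝ] F) (C : E →L[ℝ] E →L[ℝ] F) (z x : E) :
    HasFDerivAt (fun y => c + l (y - z) + C (y - z) (y - z)) (l + (C + C.flip) (x - z)) x := by
  have hl : HasFDerivAt (fun y => c + l (y - z)) l x := by
    simpa using ((l.hasFDerivAt).comp x ((hasFDerivAt_id x).sub_const z)).const_add c
  exact hl.add (hasFDerivAt_bilinear_sub_sub C z x)

theorem fderiv_fderiv_quadratic (c : F) (l : E →L[ℝ] F) (C : E →L[ℝ] E →L[ℝ] F) (z x : E) :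
    fderiv ℝ (fderiv ℝ fun y => c + l (y - z) + C (y - z) (y - z)) x = C + C.flip := by
  have hD : fderiv ℝ (fun y => c + l (y - z) + C (y - z) (y - z))
      = fun x => l + (C + C.flip) (x - z) :=
    funext fun x => (hasFDerivAt_quadratic c l C z x).fderiv
  rw [hD]
  simpa using (((C + C.flip).hasFDerivAt).comp x ((hasFDerivAt_id x).sub_const z)).const_add l
    |>.fderiv

theorem contDiff_quadratic (c : F) (l : E →L[ℝ] F) (C : E →L[ℝ] E →L[ℝ] F) (z : E) :
    ContDiff ℝ 2 fun y => c + l (y - z) + C (y - z) (y - z) := by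
  have hsub : ContDiff ℝ 2 fun y : E => y - z := contDiff_id.sub contDiff_const
  exact (contDiff_const.add (l.contDiff.comp hsub)).add
    (C.isBoundedBilinearMap.contDiff.comp (hsub.prodMk hsub))

theorem ContDiffAt.isLittleO_sub_taylor_two {f : E → F} {z : E} (hf : ContDiffAt ℝ 2 f z) :
    (fun y => f y - (f z + fderiv ℝ f z (y - z) +
        ((1 / 2 : ℝ) • fderiv ℝ (fderiv ℝ f) z) (y - z) (y - z)))
      =o[𝓝 z] fun y => ‖y - z‖ ^ 2 := by
  set B := fderiv ℝ (fderiv ℝ f) z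
  set g := fun y => f y - (f z + fderiv ℝ f z (y - z) + ((1 / 2 : ℝ) • B) (y - z) (y - z))
  have hsymm : ∀ v w, B v w = B w v := hf.isSymmSndFDerivAt (by simp)
  have hg : ∀ᶠ y in 𝓝 z, HasFDerivAt g (fderiv ℝ f y - fderiv ℝ f z - B (y - z)) y := by
    filter_upwards [hf.eventually (by simp)] with y hy
    refine (((hy.differentiableAt two_ne_zero).hasFDerivAt).sub
      (hasFDerivAt_quadratic (f z) (fderiv ℝ f z) ((1 / 2 : ℝ) • B) z y)).congr_fderiv ?_
    ext v
    simp only [sub_apply, add_apply, smul_apply, ContinuousLinearMap.flip_apply, hsymm v (y - z)]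
    module
  have hB : HasFDerivAt (fderiv ℝ f) B z :=
    ((hf.fderiv_right one_add_one_eq_two.le).differentiableAt one_ne_zero).hasFDerivAt
  refine isLittleO_iff.2 fun ε hε => ?_
  obtain ⟨r, hr, hball⟩ := Metric.eventually_nhds_iff_ball.1 <|
    hg.and (isLittleO_iff.1 hB.isLittleO hε)
  filter_upwards [ball_mem_nhds z hr] with x hx
  have hsub : closedBall z ‖x - z‖ ⊆ ball z r := closedBall_subset_ball (by rwa [← dist_eq_norm])
  have hmvt := (convex_closedBall z ‖x - z‖).norm_image_sub_le_of_norm_hasFDerivWithin_le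
    (fun y hy => (hball y (hsub hy)).1.hasFDerivWithinAt)
    (fun y hy => (hball y (hsub hy)).2.trans <|
      mul_le_mul_of_nonneg_left (by rwa [← dist_eq_norm]) hε.le)
    (mem_closedBall_self (norm_nonneg _)) (by rw [mem_closedBall, dist_eq_norm])
  simpa [g, mul_assoc, sq] using hmvt

end Calculus

section Euclidean

variable {n : ℕ}

theorem hessian_apply (φ : EuclideanSpace ℝ (Fin n) → ℝ) (x : EuclideanSpace ℝ (Fin n))
    (i j : Fin n) :
    hessian φ x i j
      = fderiv ℝ (fderiv ℝ φ) x (EuclideanSpace.single i 1) (EuclideanSpace.single j 1) := by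
  simp [hessian, iteratedFDeriv_two_apply]

theorem hessian_quadratic (c : ℝ) (l : EuclideanSpace ℝ (Fin n) →L[ℝ] ℝ)
    (C : EuclideanSpace ℝ (Fin n) →L[ℝ] EuclideanSpace ℝ (Fin n) →L[ℝ] ℝ)
    (z x : EuclideanSpace ℝ (Fin n)) (i j : Fin n) :
    hessian (fun y => c + l (y - z) + C (y - z) (y - z)) x i j
      = C (EuclideanSpace.single i 1) (EuclideanSpace.single j 1)
        + C (EuclideanSpace.single j 1) (EuclideanSpace.single i 1) := by
  rw [hessian_apply, fderiv_fderiv_quadratic]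
  rfl

theorem ViscositySupersol.one_le_sigma2_hessian_add_smul_one
    {u φ : EuclideanSpace ℝ (Fin n) → ℝ} {Ω : Set (EuclideanSpace ℝ (Fin n))}
    {z : EuclideanSpace ℝ (Fin n)} (hu : ViscositySupersol u Ω) (hz : z ∈ Ω)
    (hφ : ContDiffAt ℝ 2 φ z) (hconv : HasNonnegQuadForm (hessian φ z))
    (hmax : IsLocalMax (fun y => u y - φ y) z) {t : ℝ} (ht : 0 < t) :
    1 ≤ sigma2 (hessian φ z + t • 1) := by
  set B := fderiv ℝ (fderiv ℝ φ) z with hB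
  -- over `ℝ` the conjugate-linear `innerSL ℝ` is definitionally bilinear
  let J : EuclideanSpace ℝ (Fin n) →L[ℝ] EuclideanSpace ℝ (Fin n) →L[ℝ] ℝ := innerSL ℝ
  have hJ (v w : EuclideanSpace ℝ (Fin n)) : J v w = inner ℝ v w := rfl
  set C := (1 / 2 : ℝ) • B + (t / 2) • J
  set ψ := fun y => u z + fderiv ℝ φ z (y - z) + C (y - z) (y - z)
  have hsymm : ∀ v w, B v w = B w v := hφ.isSymmSndFDerivAt (by simp)
  have hψ_hess (x : EuclideanSpace ℝ (Fin n)) : hessian ψ x = hessian φ z + t • 1 := by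
    ext i j
    rw [hessian_quadratic, Matrix.add_apply, hessian_apply, ← hB]
    simp only [C, add_apply, smul_apply, hJ, hsymm (EuclideanSpace.single j 1), smul_eq_mul,
      EuclideanSpace.inner_single_left, PiLp.single_apply, map_one, one_mul, Matrix.smul_apply,
      Matrix.one_apply, eq_comm (a := j)]
    split_ifs <;> ring
  have hψ : TwoConvex ψ := by
    refine ⟨contDiff_quadratic _ _ _ _, fun x => ?_⟩
    rw [hψ_hess]
    exact ⟨(hconv.add_smul_one ht.le).sigma1_nonneg, (hconv.add_smul_one ht.le).sigma2_nonneg⟩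
  have hψ_ge : ∀ᶠ y in 𝓝 z, u y ≤ ψ y := by
    filter_upwards [hmax, isLittleO_iff.1 hφ.isLittleO_sub_taylor_two (half_pos ht)]
      with y hmax_y htaylor
    have hC : C (y - z) (y - z) = ((1 / 2 : ℝ) • B) (y - z) (y - z) + t / 2 * ‖y - z‖ ^ 2 := by
      simp only [C, add_apply, smul_apply, hJ, real_inner_self_eq_norm_sq, smul_eq_mul]
    simp only [ψ, hC]
    simp only [Real.norm_eq_abs, abs_pow, abs_norm] at htaylor
    linarith [(le_abs_self _).trans htaylor]
  simpa [hψ_hess] using hu ψ hψ z hz (by simp [ψ]) hψ_ge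

theorem ViscositySupersol.one_le_sigma2_hessian
    {u φ : EuclideanSpace ℝ (Fin n) → ℝ} {Ω : Set (EuclideanSpace ℝ (Fin n))}
    {z : EuclideanSpace ℝ (Fin n)} (hu : ViscositySupersol u Ω) (hz : z ∈ Ω)
    (hφ : ContDiffAt ℝ 2 φ z) (hconv : HasNonnegQuadForm (hessian φ z))
    (hmax : IsLocalMax (fun y => u y - φ y) z) :
    1 ≤ sigma2 (hessian φ z) := by
  have hlim : Tendsto (fun t : ℝ => sigma2 (hessian φ z + t • 1)) (𝓝[>] 0)
      (𝓝 (sigma2 (hessian φ z))) := by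
    simpa using ((continuous_sigma2_add_smul_one _).tendsto 0).mono_left nhdsWithin_le_nhds
  exact ge_of_tendsto hlim <| eventually_nhdsWithin_of_forall fun t ht =>
    hu.one_le_sigma2_hessian_add_smul_one hz hφ hconv hmax ht

end Euclidean

theorem comparison_principle_general {n : ℕ}
    (Ω : Set (EuclideanSpace ℝ (Fin n))) (hΩo : IsOpen Ω) (hΩb : Bornology.IsBounded Ω)
    (u : EuclideanSpace ℝ (Fin n) → ℝ) (hucont : ContinuousOn u (closure Ω))
    (hvisc : ViscositySupersol u Ω)
    (φ : EuclideanSpace ℝ (Fin n) → ℝ)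
    (V : Set (EuclideanSpace ℝ (Fin n))) (hVo : IsOpen V) (hVΩ : closure Ω ⊆ V)
    (hφC2 : ContDiffOn ℝ 2 φ V)
    (hφconv : ∀ x ∈ V, ∀ v : Fin n → ℝ, 0 ≤ ∑ i, ∑ j, v i * hessian φ x i j * v j)
    (hφσ : ∀ x ∈ closure Ω, sigma2 (hessian φ x) < 1)
    (hbdry : ∀ x ∈ frontier Ω, u x ≤ φ x) :
    ∀ x ∈ Ω, u x ≤ φ x := by
  intro x₀ hx₀
  by_contra! hlt
  obtain ⟨z, hz_closure, hzmax⟩ := (hΩb.isCompact_closure).exists_isMaxOn ⟨x₀, subset_closure hx₀⟩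
    (hucont.sub (hφC2.continuousOn.mono hVΩ))
  have hzx₀ : u x₀ - φ x₀ ≤ u z - φ z := hzmax (subset_closure hx₀)
  have hzΩ : z ∈ Ω := by
    by_contra hz
    have := hbdry z (hΩo.frontier_eq ▸ ⟨hz_closure, hz⟩)
    linarith
  have hzV : V ∈ 𝓝 z := hVo.mem_nhds (hVΩ hz_closure)
  exact (hφσ z hz_closure).not_ge <| hvisc.one_le_sigma2_hessian hzΩ (hφC2.contDiffAt hzV)
    (hφconv z (hVΩ hz_closure)) ((hzmax.on_subset subset_closure).isLocalMax (hΩo.mem_nhds hzΩ))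

/-- Comparison principle: a convex `C²` function `φ` with `σ₂(D²φ) < 1` on the closure
of a bounded open `Ω` that dominates a viscosity solution of `σ₂(D²u) ≥ 1` on `∂Ω`
dominates it in all of `Ω`. (Convexity of `φ` is expressed by nonnegativity of the
Hessian quadratic form on a neighborhood of the closure.) -/
theorem comparison_principle {n : ℕ} (hn : 2 ≤ n)
    (Ω : Set (EuclideanSpace ℝ (Fin n))) (hΩo : IsOpen Ω) (hΩb : Bornology.IsBounded Ω)
    (u : EuclideanSpace ℝ (Fin n) → ℝ) (hucont : ContinuousOn u (closure Ω))
    (hvisc : ViscositySupersol u Ω)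
    (φ : EuclideanSpace ℝ (Fin n) → ℝ)
    (V : Set (EuclideanSpace ℝ (Fin n))) (hVo : IsOpen V) (hVΩ : closure Ω ⊆ V)
    (hφC2 : ContDiffOn ℝ 2 φ V)
    (hφconv : ∀ x ∈ V, ∀ v : Fin n → ℝ, 0 ≤ ∑ i, ∑ j, v i * hessian φ x i j * v j)
    (hφσ : ∀ x ∈ closure Ω, sigma2 (hessian φ x) < 1)
    (hbdry : ∀ x ∈ frontier Ω, u x ≤ φ x) :
    ∀ x ∈ Ω, u x ≤ φ x :=
  comparison_principle_general Ω hΩo hΩb u hucont hvisc φ V hVo hVΩ hφC2 hφconv hφσ hbdry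
end
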